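/- arXiv:1403.0350 — 2 statements merged into one kernel-verified Lean document; each statement's English description precedes it below -/
import Mathlib

section
/- Let (M, α) be a contact manifold and H_θ : M → ℝ an S¹-family of positive smooth functions. On the contact fibration π : (M × D², ker(α + H_θ(p) r² dθ)) → D², the horizontal lift with respect to the contact connection of the vector field ∂_θ at a point with r = 1 equals ∂_θ − X_θ, where X_θ is the contact Hamiltonian vector field of H_θ, i.e., the unique vector field satisfying ι_{X_θ} α = H_θ and ι_{X_θ} dα = −dH_θ + dH_θ(R_α) α, with R_α the Reeb field of α. -/
open Set

/-- The exterior differential of a 1-form `β`: `dβ_x(u,v) = (D_u β)(v) - (D_v β)(u)`. -/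
noncomputable def dform {F : Type*} [NormedAddCommGroup F] [NormedSpace ℝ F]
    (β : F → F →L[ℝ] ℝ) (x : F) (u v : F) : ℝ :=
  fderiv ℝ β x u v - fderiv ℝ β x v u

/-- The 1-form `α + H̃(p,q)·(x dy - y dx)` on `M × ℝ²`, i.e. `α + H_θ(p) r² dθ` where
`H̃(p,q) = H_{θ(q)}(p)` is 0-homogeneous in `q`. -/
noncomputable def alphaH {E : Type*} [NormedAddCommGroup E] [NormedSpace ℝ E]
    (α : E → E →L[ℝ] ℝ) (Ht : E × (ℝ × ℝ) → ℝ) (z : E × (ℝ × ℝ)) :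
    (E × (ℝ × ℝ)) →L[ℝ] ℝ :=
  (α z.1).comp (ContinuousLinearMap.fst ℝ E (ℝ × ℝ)) +
    (Ht z * z.2.1) • ((ContinuousLinearMap.snd ℝ ℝ ℝ).comp (ContinuousLinearMap.snd ℝ E (ℝ × ℝ))) -
    (Ht z * z.2.2) • ((ContinuousLinearMap.fst ℝ ℝ ℝ).comp (ContinuousLinearMap.snd ℝ E (ℝ × ℝ)))

/-!
At a point with `|q| = 1`, a vector `(w, ∂_θ)` satisfies `α_H (w, ∂_θ) = α w + H` and, for `v ∈ ξ`,
`dα_H ((w, ∂_θ), (v, 0)) = dα (w, v) - dH (v, 0)`: the term `H r² dθ` only contributes through the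
derivative of `H` along the fibre, since `r² dθ (∂_θ) = 1` and `d(r² dθ)` vanishes on fibre vectors.
The two defining equations of `X` make both expressions vanish for `w = -X`. Two horizontal lifts
differ by a vector of `ker α` that is `dα`-orthogonal to `ker α`, hence by zero since `α` is contact.
-/

section Calculus

variable {𝕜 : Type*} [NontriviallyNormedField 𝕜]
  {E F G : Type*} [NormedAddCommGroup E] [NormedSpace 𝕜 E] [NormedAddCommGroup F]
  [NormedSpace 𝕜 F] [NormedAddCommGroup G] [NormedSpace 𝕜 G]

lemma fderiv_clm_apply_const_apply {β : E → F →L[𝕜] G} {x : E} (hβ : DifferentiableAt 𝕜 β x)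
    (u : E) (v : F) : fderiv 𝕜 (fun y => β y v) x u = fderiv 𝕜 β x u v := by
  simp [fderiv_clm_apply hβ (differentiableAt_const v)]

lemma fderiv_comp_prodMk_left_apply {f : E × F → G} {x : E} {y : F}
    (hf : DifferentiableAt 𝕜 f (x, y)) (v : E) :
    fderiv 𝕜 (fun x' => f (x', y)) x v = fderiv 𝕜 f (x, y) (v, 0) := by
  have h : HasFDerivAt (fun x' => f (x', y)) _ x :=
    hf.hasFDerivAt.comp x (hasFDerivAt_prodMk_left x y)
  rw [h.fderiv]
  rfl

end Calculus

section dform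

variable {F : Type*} [NormedAddCommGroup F] [NormedSpace ℝ F] (β : F → F →L[ℝ] ℝ) (x : F)

lemma dform_add_left (u u' v : F) : dform β x (u + u') v = dform β x u v + dform β x u' v := by
  simp only [dform, map_add, add_apply]
  ring

lemma dform_neg_left (u v : F) : dform β x (-u) v = -dform β x u v := by
  simp only [dform, map_neg, neg_apply]
  ring

end dform

section alphaH

variable {E : Type*} [NormedAddCommGroup E] [NormedSpace ℝ E]
  {α : E → E →L[ℝ] ℝ} {Ht : E × (ℝ × ℝ) → ℝ} {p : E} {q : ℝ × ℝ}

lemma alphaH_apply (α : E → E →L[ℝ] ℝ) (Ht : E × (ℝ × ℝ) → ℝ) (z w : E × (ℝ × ℝ)) :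
    alphaH α Ht z w = α z.1 w.1 + Ht z * (z.2.1 * w.2.2 - z.2.2 * w.2.1) := by
  simp only [alphaH, sub_apply, add_apply, smul_apply, ContinuousLinearMap.comp_apply,
    ContinuousLinearMap.coe_fst', ContinuousLinearMap.coe_snd', smul_eq_mul]
  ring

lemma differentiableAt_alphaH (hα : DifferentiableAt ℝ α p)
    (hH : DifferentiableAt ℝ Ht (p, q)) : DifferentiableAt ℝ (alphaH α Ht) (p, q) := by
  unfold alphaH
  fun_prop

lemma fderiv_alphaH_apply (hα : DifferentiableAt ℝ α p) (hH : DifferentiableAt ℝ Ht (p, q))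
    (w u : E × (ℝ × ℝ)) :
    fderiv ℝ (fun z => alphaH α Ht z w) (p, q) u =
      fderiv ℝ α p u.1 w.1 + fderiv ℝ Ht (p, q) u * (q.1 * w.2.2 - q.2 * w.2.1) +
        Ht (p, q) * (u.2.1 * w.2.2 - u.2.2 * w.2.1) := by
  have hαw : HasFDerivAt (fun z : E × (ℝ × ℝ) => α z.1 w.1) _ (p, q) :=
    (hα.hasFDerivAt.comp (p, q) hasFDerivAt_fst).clm_apply (hasFDerivAt_const w.1 _)
  have hθ : HasFDerivAt (fun z : E × (ℝ × ℝ) => z.2.1 * w.2.2 - z.2.2 * w.2.1) _ (p, q) :=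
    have hq : HasFDerivAt (fun z : E × (ℝ × ℝ) => z.2) _ (p, q) := hasFDerivAt_snd (𝕜 := ℝ)
    (hq.fst.mul_const _).sub (hq.snd.mul_const _)
  simp_rw [alphaH_apply]
  rw [HasFDerivAt.fderiv (f := fun z => α z.1 w.1 + Ht z * (z.2.1 * w.2.2 - z.2.2 * w.2.1))
    (hαw.add (hH.hasFDerivAt.mul hθ))]
  simp only [ContinuousLinearMap.comp_zero, zero_add, add_apply, ContinuousLinearMap.flip_apply,
    ContinuousLinearMap.comp_apply, ContinuousLinearMap.coe_fst', smul_apply, sub_apply,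
    ContinuousLinearMap.coe_snd', smul_eq_mul]
  ring

lemma dform_alphaH_apply_inl (hα : DifferentiableAt ℝ α p) (hH : DifferentiableAt ℝ Ht (p, q))
    (u : E × (ℝ × ℝ)) (v : E) :
    dform (alphaH α Ht) (p, q) u (v, 0) =
      dform α p u.1 v - fderiv ℝ Ht (p, q) (v, 0) * (q.1 * u.2.2 - q.2 * u.2.1) := by
  have hαH := differentiableAt_alphaH hα hH
  simp only [dform, ← fderiv_clm_apply_const_apply hαH, fderiv_alphaH_apply hα hH,
    Prod.fst_zero, Prod.snd_zero]
  ring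

variable (hq : q.1 ^ 2 + q.2 ^ 2 = 1)
include hq

lemma alphaH_apply_rotation (w : E) :
    alphaH α Ht (p, q) (w, (-q.2, q.1)) = α p w + Ht (p, q) := by
  rw [alphaH_apply]
  linear_combination Ht (p, q) * hq

lemma dform_alphaH_apply_rotation (hα : DifferentiableAt ℝ α p) (hH : DifferentiableAt ℝ Ht (p, q))
    (w v : E) :
    dform (alphaH α Ht) (p, q) (w, (-q.2, q.1)) (v, 0) =
      dform α p w v - fderiv ℝ Ht (p, q) (v, 0) := by
  rw [dform_alphaH_apply_inl hα hH]
  linear_combination -fderiv ℝ Ht (p, q) (v, 0) * hq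

end alphaH

/-- Here `∂_θ = (-q₂, q₁)` on the base and the fibrewise contact distribution is
`ξ = {(v, 0) : α_p v = 0}`; the second conjunct is uniqueness of the horizontal lift. -/
theorem stmt_6_general {E : Type*} [NormedAddCommGroup E] [NormedSpace ℝ E]
    (α : E → E →L[ℝ] ℝ) (hαsmooth : ContDiff ℝ (⊤ : ℕ∞) α)
    (hαcontact : ∀ x : E, α x ≠ 0 ∧
      ∀ u : E, α x u = 0 → (∀ v : E, α x v = 0 → dform α x u v = 0) → u = 0)
    (R : E → E)
    (Ht : E × (ℝ × ℝ) → ℝ)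
    (hHsmooth : ContDiffOn ℝ (⊤ : ℕ∞) Ht {z : E × (ℝ × ℝ) | z.2 ≠ 0})
    (X : E × (ℝ × ℝ) → E)
    (hXham : ∀ (p : E) (q : ℝ × ℝ), α p (X (p, q)) = Ht (p, q))
    (hXdham : ∀ (p : E) (q : ℝ × ℝ) (v : E),
      dform α p (X (p, q)) v =
        -(fderiv ℝ (fun p' : E => Ht (p', q)) p v) +
          fderiv ℝ (fun p' : E => Ht (p', q)) p (R p) * α p v) :
    ∀ (p : E) (q : ℝ × ℝ), q.1 ^ 2 + q.2 ^ 2 = 1 →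
      (alphaH α Ht (p, q) (-(X (p, q)), (-q.2, q.1)) = 0 ∧
        (∀ v : E, α p v = 0 →
          dform (alphaH α Ht) (p, q) (-(X (p, q)), (-q.2, q.1)) (v, 0) = 0)) ∧
      ∀ u : E × (ℝ × ℝ), u.2 = (-q.2, q.1) →
        alphaH α Ht (p, q) u = 0 →
        (∀ v : E, α p v = 0 → dform (alphaH α Ht) (p, q) u (v, 0) = 0) →
        u = (-(X (p, q)), (-q.2, q.1)) := by
  intro p q hq
  have hα : DifferentiableAt ℝ α p := hαsmooth.differentiable (by simp) p
  have hH : DifferentiableAt ℝ Ht (p, q) := by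
    refine (hHsmooth.differentiableOn (by simp)).differentiableAt
      ((isOpen_ne.preimage continuous_snd).mem_nhds ?_)
    rintro (h : q = 0)
    simp [h] at hq
  have hXξ : ∀ v, α p v = 0 → dform α p (X (p, q)) v = -fderiv ℝ Ht (p, q) (v, 0) := by
    intro v hv
    rw [hXdham, hv, mul_zero, add_zero, fderiv_comp_prodMk_left_apply hH]
  refine ⟨⟨?_, fun v hv => ?_⟩, ?_⟩
  · rw [alphaH_apply_rotation hq, map_neg, hXham, neg_add_cancel]
  · rw [dform_alphaH_apply_rotation hq hα hH, dform_neg_left, hXξ v hv, neg_neg, sub_self]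
  rintro ⟨w, _⟩ rfl hker hhor
  rw [alphaH_apply_rotation hq] at hker
  suffices w + X (p, q) = 0 by rw [eq_neg_of_add_eq_zero_left this]
  refine (hαcontact p).2 _ (by rw [map_add, hXham, hker]) fun v hv => ?_
  have hw := hhor v hv
  rw [dform_alphaH_apply_rotation hq hα hH, sub_eq_zero] at hw
  rw [dform_add_left, hw, hXξ v hv, add_neg_cancel]

/-- on the contact fibration `π : (M × D², ker(α + H_θ(p) r² dθ)) → D²`, the
horizontal lift (for the contact connection) of `∂_θ` at a point `(p,q)` with `r = |q| = 1`
is `∂_θ - X_θ`, where `X_θ` is the contact Hamiltonian vector field of `H_θ`, i.e. the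
unique vector field with `ι_{X}α = H` and `ι_{X}dα = -dH + dH(R_α) α` (`R_α` the Reeb field).
Horizontality means: the lift projects to `∂_θ` (here `∂_θ = (-q₂, q₁)` on the base), lies
in `ker α_H`, and pairs trivially under `dα_H` with the fiberwise contact distribution
`ξ = {(v,0) : α_p(v) = 0}`; such a lift is moreover unique. -/
theorem stmt_6 {E : Type*} [NormedAddCommGroup E] [NormedSpace ℝ E]
    (α : E → E →L[ℝ] ℝ) (hαsmooth : ContDiff ℝ (⊤ : ℕ∞) α)
    (hαcontact : ∀ x : E, α x ≠ 0 ∧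
      ∀ u : E, α x u = 0 → (∀ v : E, α x v = 0 → dform α x u v = 0) → u = 0)
    (R : E → E) (hReeb : ∀ x, α x (R x) = 1 ∧ ∀ v : E, dform α x (R x) v = 0)
    (Ht : E × (ℝ × ℝ) → ℝ)
    (hHsmooth : ContDiffOn ℝ (⊤ : ℕ∞) Ht {z : E × (ℝ × ℝ) | z.2 ≠ 0})
    (hHhom : ∀ (p : E) (q : ℝ × ℝ) (c : ℝ), 0 < c → Ht (p, c • q) = Ht (p, q))
    (hHpos : ∀ z, 0 < Ht z)
    (X : E × (ℝ × ℝ) → E)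
    (hXham : ∀ (p : E) (q : ℝ × ℝ), α p (X (p, q)) = Ht (p, q))
    (hXdham : ∀ (p : E) (q : ℝ × ℝ) (v : E),
      dform α p (X (p, q)) v =
        -(fderiv ℝ (fun p' : E => Ht (p', q)) p v) +
          fderiv ℝ (fun p' : E => Ht (p', q)) p (R p) * α p v) :
    ∀ (p : E) (q : ℝ × ℝ), q.1 ^ 2 + q.2 ^ 2 = 1 →
      (alphaH α Ht (p, q) (-(X (p, q)), (-q.2, q.1)) = 0 ∧
        (∀ v : E, α p v = 0 →
          dform (alphaH α Ht) (p, q) (-(X (p, q)), (-q.2, q.1)) (v, 0) = 0)) ∧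
      ∀ u : E × (ℝ × ℝ), u.2 = (-q.2, q.1) →
        alphaH α Ht (p, q) u = 0 →
        (∀ v : E, α p v = 0 → dform (alphaH α Ht) (p, q) u (v, 0) = 0) →
        u = (-(X (p, q)), (-q.2, q.1)) :=
  stmt_6_general α hαsmooth hαcontact R Ht hHsmooth X hXham hXdham
end

section
/- Suppose {φ_θ}, θ ∈ [0,1], is a family of diffeomorphisms of a manifold N whose graphs, under an identification of a neighborhood of the diagonal with a neighborhood of the zero section of J¹(N), are 1-jets of functions f_θ : N → ℝ, and suppose the family is generated by a positive contact Hamiltonian (with respect to the standard contact form dz − λ on J¹(N), positivity of the Hamiltonian on the image). Then ∂f_θ/∂θ > 0 at every point; in particular, if φ_0 = φ_1 (so f_0 = f_1) and N is nonempty, no such positive loop exists. -/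
/-!
Along the flow line `γ(t) = φ_t ζ` of a point `ζ` of the Legendrian `j¹f_0`, the point stays on
`j¹f_t`, so `γ(t) = (x t, df_t(x t), f_t(x t))`. Differentiating `z = f_t(x t)` gives
`ż = ∂_θ f + df_t(ẋ) = ∂_θ f + p(ẋ)`, i.e. the contact Hamiltonian `α(γ̇) = ż - p(ẋ)` equals
`∂_θ f` (Hamilton–Jacobi). Positivity of the Hamiltonian thus makes each `t ↦ f_t x` strictly
increasing, which rules out `f_0 = f_1`.
-/

open Set

section

open Function

variable {E F : Type*} [NormedAddCommGroup E] [NormedSpace ℝ E]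
  [NormedAddCommGroup F] [NormedSpace ℝ F]

theorem hasDerivAt_apply_curve {f : ℝ → E → F} {x : ℝ → E} {v : E} {θ : ℝ}
    (hf : DifferentiableAt ℝ (uncurry f) (θ, x θ)) (hx : HasDerivAt x v θ) :
    HasDerivAt (fun t => f t (x t))
      (deriv (fun t => f t (x θ)) θ + fderiv ℝ (f θ) (x θ) v) θ := by
  set A := fderiv ℝ (uncurry f) (θ, x θ)
  have hA : HasFDerivAt (uncurry f) A (θ, x θ) := hf.hasFDerivAt
  have h_curve : HasDerivAt (fun t => f t (x t)) (A (1, v)) θ := by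
    exact hA.comp_hasDerivAt θ ((hasDerivAt_id θ).prodMk hx)
  have h_time : HasDerivAt (fun t => f t (x θ)) (A (1, 0)) θ := by
    exact hA.comp_hasDerivAt θ ((hasDerivAt_id θ).prodMk (hasDerivAt_const θ (x θ)))
  have h_space : HasFDerivAt (f θ) (A.comp ((0 : E →L[ℝ] ℝ).prod (.id ℝ E))) (x θ) :=
    hA.comp (x θ) ((hasFDerivAt_const θ (x θ)).prodMk (hasFDerivAt_id (x θ)))
  rw [h_time.deriv, h_space.fderiv]
  convert h_curve using 1
  simp [← map_add]

abbrev OneJetSpace (N : Type*) [NormedAddCommGroup N] [NormedSpace ℝ N] :=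
  N × ((N →L[ℝ] ℝ) × ℝ)

/-- The standard contact form `dz - λ` at `ζ = (x, p, z)`, evaluated on `w = (v, π, s)`. -/
def contactForm (ζ w : OneJetSpace E) : ℝ := w.2.2 - ζ.2.1 w.1

noncomputable def oneJet (g : E → ℝ) (x : E) : OneJetSpace E := (x, (fderiv ℝ g x, g x))

theorem contactForm_eq_deriv_of_mem_range_oneJet {f : ℝ → E → ℝ} {γ : ℝ → OneJetSpace E}
    {w : OneJetSpace E} {θ : ℝ} (hf : DifferentiableAt ℝ (uncurry f) (θ, (γ θ).1))
    (hγ : HasDerivAt γ w θ) (hγf : ∀ t, γ t ∈ range (oneJet (f t))) :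
    contactForm (γ θ) w = deriv (fun t => f t (γ θ).1) θ := by
  have h_jet : ∀ t, γ t = oneJet (f t) (γ t).1 := fun t => by
    obtain ⟨y, hy⟩ := hγf t
    rw [← hy]; rfl
  have hx : HasDerivAt (fun t => (γ t).1) w.1 θ := by
    exact (ContinuousLinearMap.fst ℝ _ _).hasFDerivAt.comp_hasDerivAt θ hγ
  have hz : HasDerivAt (fun t => (γ t).2.2) w.2.2 θ := by
    exact ((ContinuousLinearMap.snd ℝ _ _).comp
      (ContinuousLinearMap.snd ℝ _ _)).hasFDerivAt.comp_hasDerivAt θ hγ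
  have hz_eq : (fun t => (γ t).2.2) = fun t => f t (γ t).1 :=
    funext fun t => congrArg (·.2.2) (h_jet t)
  rw [hz_eq] at hz
  have hp : (γ θ).2.1 = fderiv ℝ (f θ) (γ θ).1 := congrArg (·.2.1) (h_jet θ)
  rw [contactForm, hp, hz.unique (hasDerivAt_apply_curve hf hx)]
  ring

theorem deriv_pos_of_isotopy_oneJet {f : ℝ → E → ℝ} (hf : Differentiable ℝ (uncurry f))
    {φ W : ℝ → OneJetSpace E → OneJetSpace E}
    (hflow : ∀ θ ζ, HasDerivAt (fun t => φ t ζ) (W θ (φ θ ζ)) θ)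
    (hpos : ∀ θ ζ, 0 < contactForm ζ (W θ ζ))
    (hgraph : ∀ θ, φ θ '' range (oneJet (f 0)) = range (oneJet (f θ))) (θ : ℝ) (x : E) :
    0 < deriv (fun t => f t x) θ := by
  obtain ⟨ζ, hζ, hζx⟩ : oneJet (f θ) x ∈ φ θ '' range (oneJet (f 0)) :=
    hgraph θ ▸ mem_range_self x
  have h_on : ∀ t, φ t ζ ∈ range (oneJet (f t)) := fun t =>
    hgraph t ▸ mem_image_of_mem (φ t) hζ
  have h_hj := contactForm_eq_deriv_of_mem_range_oneJet (hf _) (hflow θ ζ) h_on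
  rw [hζx] at h_hj
  exact h_hj ▸ hpos θ _

end

theorem stmt_12_general {N : Type*} [NormedAddCommGroup N] [NormedSpace ℝ N]
    (f : ℝ → N → ℝ)
    (hf : ContDiff ℝ (⊤ : ℕ∞) (fun q : ℝ × N => f q.1 q.2))
    (φ : ℝ → N × ((N →L[ℝ] ℝ) × ℝ) → N × ((N →L[ℝ] ℝ) × ℝ))
    (W : ℝ → N × ((N →L[ℝ] ℝ) × ℝ) → N × ((N →L[ℝ] ℝ) × ℝ))
    (hflow : ∀ θ ζ, HasDerivAt (fun t => φ t ζ) (W θ (φ θ ζ)) θ)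
    -- positivity of the contact Hamiltonian `H = α(W)` for `α = dz - λ`:
    (hpos : ∀ θ (ζ : N × ((N →L[ℝ] ℝ) × ℝ)), 0 < (W θ ζ).2.2 - ζ.2.1 ((W θ ζ).1))
    -- the isotopy moves the Legendrian graphs `j¹f_θ`:
    (hgraph : ∀ θ,
      φ θ '' (range (fun x : N => (x, (fderiv ℝ (f 0) x, f 0 x)))) =
        range (fun x : N => (x, (fderiv ℝ (f θ) x, f θ x)))) :
    (∀ (θ : ℝ) (x : N), 0 < deriv (fun t => f t x) θ) ∧
      (Nonempty N → f 0 ≠ f 1) := by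
  have h_deriv := deriv_pos_of_isotopy_oneJet (hf.differentiable (by simp)) hflow hpos hgraph
  refine ⟨h_deriv, fun ⟨x⟩ h_loop => ?_⟩
  have h_mono : StrictMono (fun t => f t x) := strictMono_of_deriv_pos (h_deriv · x)
  exact (h_mono zero_lt_one).ne (congrFun h_loop x)

/-- model `J¹(N) = N × N* × ℝ` with its standard contact form
`(dz - λ)_{(x,p,z)}(v,w,s) = s - p(v)`. Suppose `{φ_θ}` is an isotopy of `J¹(N)` generated
by a positive contact Hamiltonian (positivity: `α(d/dθ φ_θ(ζ)) > 0` along the flow), which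
moves the Legendrian sections: `φ_θ` maps the image of `j¹f_0` onto the image of `j¹f_θ`,
where `j¹f = (id, df, f)`. Then `∂f_θ/∂θ > 0` everywhere; in particular if `N` is nonempty
there is no such positive loop: `f_0 ≠ f_1`. -/
theorem stmt_12 {N : Type*} [NormedAddCommGroup N] [NormedSpace ℝ N]
    (f : ℝ → N → ℝ)
    (hf : ContDiff ℝ (⊤ : ℕ∞) (fun q : ℝ × N => f q.1 q.2))
    (φ : ℝ → N × ((N →L[ℝ] ℝ) × ℝ) → N × ((N →L[ℝ] ℝ) × ℝ))
    (W : ℝ → N × ((N →L[ℝ] ℝ) × ℝ) → N × ((N →L[ℝ] ℝ) × ℝ))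
    (hφ0 : φ 0 = id)
    (hflow : ∀ θ ζ, HasDerivAt (fun t => φ t ζ) (W θ (φ θ ζ)) θ)
    -- positivity of the contact Hamiltonian `H = α(W)` for `α = dz - λ`:
    (hpos : ∀ θ (ζ : N × ((N →L[ℝ] ℝ) × ℝ)), 0 < (W θ ζ).2.2 - ζ.2.1 ((W θ ζ).1))
    -- the isotopy moves the Legendrian graphs `j¹f_θ`:
    (hgraph : ∀ θ,
      φ θ '' (range (fun x : N => (x, (fderiv ℝ (f 0) x, f 0 x)))) =
        range (fun x : N => (x, (fderiv ℝ (f θ) x, f θ x)))) :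
    (∀ (θ : ℝ) (x : N), 0 < deriv (fun t => f t x) θ) ∧
      (Nonempty N → f 0 ≠ f 1) :=
  stmt_12_general f hf φ W hflow hpos hgraph
end
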